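/- arXiv:1912.13345 — 7 statements merged into one kernel-verified Lean document; each statement's English description precedes it below -/
import Mathlib

section
/- For q ≥ 2 and w ≥ 0, the function φ_w(x) = sgn(x+w)|x+w|^q + sgn(x-w)|x-w|^q is an odd function on ℝ which is nondecreasing and convex on (0, ∞). -/
/-!
Write `G t = sign t * |t| ^ q`, so that `φ x = G (x + w) + G (x - w)`. Oddness is immediate from
that of `G`. Since `q > 1`, `G` is differentiable everywhere with `G' t = q * |t| ^ (q - 1) ≥ 0`
(at `0` because `|G t| ≤ |t| ^ q = o(t)`), so `φ` is monotone with
`φ' x = q * (|x + w| ^ (q - 1) + |x - w| ^ (q - 1))`. As `q - 1 ≥ 1`, this derivative is a convex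
even function of `x`, hence nondecreasing on `[0, ∞)`, and therefore `φ` is convex on `(0, ∞)`.
-/

open Real Set Filter Topology Asymptotics

theorem ConvexOn.monotoneOn_Ici_of_even {𝕜 β : Type*} [Field 𝕜] [LinearOrder 𝕜]
    [IsStrictOrderedRing 𝕜] [AddCommMonoid β] [LinearOrder β] [IsOrderedAddMonoid β]
    [Module 𝕜 β] [PosSMulStrictMono 𝕜 β] {f : 𝕜 → β} (hf : ConvexOn 𝕜 univ f)
    (heven : ∀ x, f (-x) = f x) : MonotoneOn f (Ici 0) := by
  intro x hx y _ hxy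
  have hseg : x ∈ segment 𝕜 (-y) y := by
    rw [segment_eq_Icc (by linarith [mem_Ici.mp hx])]
    exact ⟨by linarith [mem_Ici.mp hx], hxy⟩
  simpa [heven] using hf.le_on_segment (mem_univ _) (mem_univ _) hseg

theorem convexOn_abs_rpow {p : ℝ} (hp : 1 ≤ p) : ConvexOn ℝ univ fun x : ℝ => |x| ^ p := by
  refine ⟨convex_univ, fun x _ y _ a b ha hb hab => ?_⟩
  calc |a • x + b • y| ^ p ≤ (a • |x| + b • |y|) ^ p := by
        gcongr
        simpa [smul_eq_mul, abs_mul, abs_of_nonneg ha, abs_of_nonneg hb] using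
          abs_add_le (a * x) (b * y)
    _ ≤ a • |x| ^ p + b • |y| ^ p :=
        (convexOn_rpow hp).2 (abs_nonneg x) (abs_nonneg y) ha hb hab

theorem hasDerivAt_sign_mul_abs_rpow {p : ℝ} (hp : 1 < p) (t : ℝ) :
    HasDerivAt (fun t => sign t * |t| ^ p) (p * |t| ^ (p - 1)) t := by
  have habs := hasDerivAt_abs_rpow t hp
  rcases lt_trichotomy t 0 with ht | rfl | ht
  · refine (habs.neg.congr_deriv ?_).congr_of_eventuallyEq ?_
    · rw [abs_of_neg ht, show p - 1 = p - 2 + 1 by ring, rpow_add_one (by linarith)]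
      ring
    · filter_upwards [Iio_mem_nhds ht] with s hs
      simp [sign_of_neg hs]
  · have hG : (fun s => sign s * |s| ^ p) =O[𝓝 0] fun s => |s| ^ p := by
      refine .of_bound 1 (.of_forall fun s => ?_)
      rw [norm_mul, one_mul]
      refine mul_le_of_le_one_left (norm_nonneg _) ?_
      rcases sign_apply_eq s with h | h | h <;> simp [h]
    rw [hasDerivAt_iff_isLittleO] at habs ⊢
    simp only [abs_zero, zero_rpow (by linarith : p ≠ 0), zero_rpow (by linarith : p - 1 ≠ 0),
      sub_zero, mul_zero, smul_zero] at habs ⊢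
    exact hG.trans_isLittleO habs
  · refine (habs.congr_deriv ?_).congr_of_eventuallyEq ?_
    · rw [abs_of_pos ht, show p - 1 = p - 2 + 1 by ring, rpow_add_one ht.ne', mul_assoc]
    · filter_upwards [Ioi_mem_nhds ht] with s hs
      simp [sign_of_pos hs]

theorem convexOn_abs_add_rpow_add_abs_sub_rpow {p : ℝ} (hp : 1 ≤ p) (w : ℝ) :
    ConvexOn ℝ univ fun x : ℝ => |x + w| ^ p + |x - w| ^ p := by
  have h := ((convexOn_abs_rpow hp).translate_left w).add
    ((convexOn_abs_rpow hp).translate_left (-w))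
  simp only [preimage_univ, Function.comp_def, ← sub_eq_add_neg] at h
  exact h

theorem stmt_0_general (q w : ℝ) (hq : 2 ≤ q)
    (φ : ℝ → ℝ)
    (hφ : ∀ x : ℝ, φ x = Real.sign (x + w) * |x + w| ^ q + Real.sign (x - w) * |x - w| ^ q) :
    (∀ x : ℝ, φ (-x) = -φ x) ∧ MonotoneOn φ (Set.Ioi 0) ∧ ConvexOn ℝ (Set.Ioi 0) φ := by
  let φ' := fun x => q * (|x + w| ^ (q - 1) + |x - w| ^ (q - 1))
  have hG := hasDerivAt_sign_mul_abs_rpow (by linarith : 1 < q)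
  have hφ' (x : ℝ) : HasDerivAt φ (φ' x) x := by
    have h := ((hG _).comp_add_const x w).add ((hG _).comp_sub_const x w)
    rw [← mul_add] at h
    exact h.congr_of_eventuallyEq (.of_forall hφ)
  have hφ'_mono : MonotoneOn φ' (Ici 0) := by
    have hconv := convexOn_abs_add_rpow_add_abs_sub_rpow (by linarith : 1 ≤ q - 1) w
    have h := hconv.monotoneOn_Ici_of_even fun x => by
      rw [← abs_neg (-x + w), ← abs_neg (-x - w)]
      ring_nf
    exact fun x hx y hy hxy => mul_le_mul_of_nonneg_left (h hx hy hxy) (by linarith)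
  have hmono : Monotone φ := monotone_of_hasDerivAt_nonneg hφ' fun x => by positivity
  refine ⟨fun x => ?_, hmono.monotoneOn _, ?_⟩
  · rw [hφ, hφ, show -x + w = -(x - w) by ring, show -x - w = -(x + w) by ring, Real.sign_neg,
      Real.sign_neg, abs_neg, abs_neg]
    ring
  · refine MonotoneOn.convexOn_of_deriv (convex_Ioi 0)
      (fun x _ => (hφ' x).continuousAt.continuousWithinAt)
      (fun x _ => (hφ' x).differentiableAt.differentiableWithinAt) ?_
    rw [interior_Ioi]
    intro x hx y hy hxy
    rw [(hφ' x).deriv, (hφ' y).deriv]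
    exact hφ'_mono (mem_Ici_of_Ioi hx) (mem_Ici_of_Ioi hy) hxy

theorem stmt_0 (q w : ℝ) (hq : 2 ≤ q) (hw : 0 ≤ w)
    (φ : ℝ → ℝ)
    (hφ : ∀ x : ℝ, φ x = Real.sign (x + w) * |x + w| ^ q + Real.sign (x - w) * |x - w| ^ q) :
    (∀ x : ℝ, φ (-x) = -φ x) ∧ MonotoneOn φ (Set.Ioi 0) ∧ ConvexOn ℝ (Set.Ioi 0) φ :=
  stmt_0_general q w hq φ hφ
end

section
/- For q ≥ 3 and x > 1, we have q(q-1)x²((x+1)^{q-2}+(x-1)^{q-2}) − 2qx((x+1)^{q-1}+(x-1)^{q-1}) + 2((x+1)^q+(x-1)^q) > 0. -/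
theorem stmt_2 (q x : ℝ) (hq : 3 ≤ q) (hx : 1 < x) :
    0 < q * (q - 1) * x ^ 2 * ((x + 1) ^ (q - 2) + (x - 1) ^ (q - 2))
      - 2 * q * x * ((x + 1) ^ (q - 1) + (x - 1) ^ (q - 1))
      + 2 * ((x + 1) ^ q + (x - 1) ^ q) := by
  have hA : (0:ℝ) < x + 1 := by linarith
  have hB : (0:ℝ) < x - 1 := by linarith
  have eA1 : (x + 1) ^ (q - 1) = (x + 1) ^ (q - 2) * (x + 1) := by
    rw [show q - 1 = (q - 2) + 1 by ring, Real.rpow_add_one hA.ne']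
  have eA2 : (x + 1) ^ q = (x + 1) ^ (q - 2) * (x + 1) * (x + 1) := by
    rw [show q = (q - 2) + 1 + 1 by ring, Real.rpow_add_one hA.ne',
      Real.rpow_add_one hA.ne']; ring_nf
  have eB1 : (x - 1) ^ (q - 1) = (x - 1) ^ (q - 2) * (x - 1) := by
    rw [show q - 1 = (q - 2) + 1 by ring, Real.rpow_add_one hB.ne']
  have eB2 : (x - 1) ^ q = (x - 1) ^ (q - 2) * (x - 1) * (x - 1) := by
    rw [show q = (q - 2) + 1 + 1 by ring, Real.rpow_add_one hB.ne',
      Real.rpow_add_one hB.ne']; ring_nf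
  have hPA : (0:ℝ) < (x + 1) ^ (q - 2) := Real.rpow_pos_of_pos hA _
  have hPB : (0:ℝ) < (x - 1) ^ (q - 2) := Real.rpow_pos_of_pos hB _
  have hP : (0:ℝ) < q * (q - 1) * x ^ 2 - 2 * q * x * (x + 1) + 2 * (x + 1) ^ 2 := by
    nlinarith [sq_nonneg x, mul_pos (sub_pos.2 hx) (sub_pos.2 hx),
      mul_nonneg (mul_nonneg (by linarith : (0:ℝ) ≤ q - 3) (by linarith : (0:ℝ) ≤ q - 1)) (sq_nonneg x),
      mul_nonneg (by linarith : (0:ℝ) ≤ q - 3) (by linarith : (0:ℝ) ≤ x)]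
  have hN : (0:ℝ) < q * (q - 1) * x ^ 2 - 2 * q * x * (x - 1) + 2 * (x - 1) ^ 2 := by
    nlinarith [mul_nonneg (mul_nonneg (by linarith : (0:ℝ) ≤ q - 3) (by linarith : (0:ℝ) ≤ q - 1)) (sq_nonneg x),
      mul_nonneg (by linarith : (0:ℝ) ≤ q - 3) (by linarith : (0:ℝ) ≤ x), sq_nonneg x]
  rw [eA1, eA2, eB1, eB2]
  nlinarith [mul_pos hPA hP, mul_pos hPB hN]
end

section
/- Let r : ℝ → ℝ be even, nondecreasing and convex on (0,∞), and set φ(x) = x·r(x). Then for all 0 < a < b: (φ(a+b) − φ(b−a))/(2a) − (φ(a+b) + φ(b−a))/(2b) ≥ φ(b)/b − φ(a)/a. -/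
theorem stmt_4 (r : ℝ → ℝ) (hcont : Continuous r) (heven : ∀ x : ℝ, r (-x) = r x)
    (hmono : MonotoneOn r (Set.Ioi 0)) (hconv : ConvexOn ℝ (Set.Ioi 0) r)
    (φ : ℝ → ℝ) (hφ : ∀ x : ℝ, φ x = x * r x)
    (a b : ℝ) (ha : 0 < a) (hab : a < b) :
    (φ (a + b) - φ (b - a)) / (2 * a) - (φ (a + b) + φ (b - a)) / (2 * b)
      ≥ φ b / b - φ a / a := by
  have hb : 0 < b := ha.trans hab
  have hba : 0 < b - a := by linarith
  have hab2 : (0:ℝ) < a + b := by linarith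
  have hmem : ∀ x : ℝ, 0 < x → x ∈ Set.Ioi (0:ℝ) := fun x hx => hx
  have hΔ : r (b - a) ≤ r (a + b) := hmono (hmem _ hba) (hmem _ hab2) (by linarith)
  -- key polynomial inequality
  have key : 2 * a * b * (r b - r a) ≤ (b ^ 2 - a ^ 2) * (r (a + b) - r (b - a)) := by
    rcases le_or_gt a (b - a) with hcase | hcase
    · -- case 2a ≤ b : use points b-a < b < a+b, and a ≤ b-a
      have F2 : (a + b - (b - a)) * r b ≤ (a + b - b) * r (b - a) + (b - (b - a)) * r (a + b) :=
        hconv.secant_mono_aux1 (hmem _ hba) (hmem _ hab2) (by linarith) (by linarith)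
      rcases eq_or_lt_of_le hcase with heq | hlt
      · have hra : r (b - a) = r a := by rw [← heq]
        have hC : 0 ≤ a ^ 2 * (r (a + b) - r (b - a)) := by nlinarith [hΔ]
        have hA := mul_le_mul_of_nonneg_left F2 hb.le
        have hb2 : b = 2 * a := by linarith
        subst hb2
        nlinarith [hA, hC, hra]
      · -- a < b - a : also use points a < b-a < a+b
        have F1 : (a + b - a) * r (b - a) ≤ (a + b - (b - a)) * r a + (b - a - a) * r (a + b) :=
          hconv.secant_mono_aux1 (hmem _ ha) (hmem _ hab2) hlt (by linarith)
        have hA := mul_le_mul_of_nonneg_left F2 hb.le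
        have hB := mul_le_mul_of_nonneg_left F1 hb.le
        have hC : 0 ≤ a * (b - a) * (r (a + b) - r (b - a)) := by
          apply mul_nonneg (by positivity) (by linarith)
        nlinarith [hA, hB, hC]
    · -- case b < 2a : use points a < b < a+b
      have hra : r (b - a) ≤ r a := hmono (hmem _ hba) (hmem _ ha) hcase.le
      have F3 : (a + b - a) * r b ≤ (a + b - b) * r a + (b - a) * r (a + b) :=
        hconv.secant_mono_aux1 (hmem _ ha) (hmem _ hab2) hab (by linarith)
      have hA := mul_le_mul_of_nonneg_left F3 (by positivity : (0:ℝ) ≤ 2 * a)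
      have hB := mul_le_mul_of_nonneg_left hra (by positivity : (0:ℝ) ≤ 2 * a * (b - a))
      have hC : 0 ≤ (b - a) ^ 2 * (r (a + b) - r (b - a)) := by
        apply mul_nonneg (by positivity) (by linarith)
      nlinarith [hA, hB, hC]
  -- convert to goal
  rw [ge_iff_le, hφ, hφ, hφ, hφ]
  rw [div_sub_div _ _ hb.ne' ha.ne',
    div_sub_div _ _ (by positivity : (2*a) ≠ 0) (by positivity : (2*b) ≠ 0),
    div_le_div_iff₀ (by positivity) (by positivity)]
  nlinarith [key, mul_pos ha hb, mul_pos (mul_pos ha hb) (mul_pos ha hb), sq_nonneg (a*b)]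
end

section
/- The constant D = 1 is the smallest constant such that D·[(φ(a+b) − φ(b−a))/(2a) − (φ(a+b) + φ(b−a))/(2b)] ≥ φ(b)/b − φ(a)/a holds for all 0 < a < b and all φ of the form φ(x) = x·r(x) with r even, nondecreasing convex on (0,∞); indeed, taking r(x) = |x| forces D ≥ 1. -/
/-!
With `c = a + b` and `d = b - a`, the bracket simplifies to `c d (r c - r d) / (2 a b)`, so the
inequality for `D = 1` reads `2 a b (r b - r a) ≤ c d (r c - r d)`. Convexity gives
`a (r b - r a) ≤ d (r c - r b)` (slopes on `[a, b]` and `[b, c]`). The remaining increment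
`r b - r d` is at least `r b - r a` when `d ≤ a` (monotonicity), and at least `a / d` times it when
`a ≤ d` (slopes through `b`); in both cases `c d (r c - r d) ≥ 2 a b (r b - r a)` follows.

For `r = |·|` and `b = 1` the inequality becomes `D (1 - a²) ≥ 1 - a`, i.e. `D (1 + a) ≥ 1` for
every `a ∈ (0, 1)`, which forces `D ≥ 1`.
-/

open Set

lemma div_two_mul_sub_div_two_mul_eq (u v : ℝ) {a b : ℝ} (ha : a ≠ 0) (hb : b ≠ 0) :
    ((a + b) * u - (b - a) * v) / (2 * a) - ((a + b) * u + (b - a) * v) / (2 * b)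
      = (a + b) * (b - a) * (u - v) / (2 * a * b) := by
  field_simp
  ring

namespace ConvexOn

variable {r : ℝ → ℝ} {a b : ℝ}

lemma mul_sub_le_mul_sub_add (hconv : ConvexOn ℝ (Ioi 0) r) (ha : 0 < a) (hab : a < b) :
    a * (r b - r a) ≤ (b - a) * (r (a + b) - r b) := by
  have h := hconv.slope_mono_adjacent ha (show (0 : ℝ) < a + b by linarith) hab (by linarith)
  rw [add_sub_cancel_right, div_le_div_iff₀ (sub_pos.2 hab) ha] at h
  linarith

lemma mul_sub_le_mul_sub_sub (hconv : ConvexOn ℝ (Ioi 0) r) (ha : 0 < a) (hab : a ≤ b - a) :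
    a * (r b - r a) ≤ (b - a) * (r b - r (b - a)) := by
  have hb : 0 < b := by linarith
  have h := hconv.secant_mono (x := a) (y := b - a) hb ha (show (0 : ℝ) < b - a by linarith)
    (by linarith) (by linarith) hab
  rw [sub_sub_cancel_left, ← neg_sub b a, div_neg, div_neg, neg_le_neg_iff,
    div_le_div_iff₀ ha (by linarith)] at h
  linarith

lemma two_mul_mul_sub_le (hconv : ConvexOn ℝ (Ioi 0) r) (hmono : MonotoneOn r (Ioi 0))
    (ha : 0 < a) (hab : a < b) :
    2 * a * b * (r b - r a) ≤ (a + b) * (b - a) * (r (a + b) - r (b - a)) := by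
  have hb : 0 < b := ha.trans hab
  have hd : 0 < b - a := sub_pos.2 hab
  have hrab : 0 ≤ r b - r a := sub_nonneg.2 (hmono ha hb hab.le)
  have hright := hconv.mul_sub_le_mul_sub_add ha hab
  have hmid : min a (b - a) * (r b - r a) ≤ (b - a) * (r b - r (b - a)) := by
    rcases le_total a (b - a) with had | hda
    · rw [min_eq_left had]
      exact hconv.mul_sub_le_mul_sub_sub ha had
    · rw [min_eq_right hda]
      exact mul_le_mul_of_nonneg_left (by linarith [hmono hd ha hda]) hd.le
  have hweight : 2 * a * b ≤ (a + b) * (a + min a (b - a)) := by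
    rcases le_total a (b - a) with had | hda
    · rw [min_eq_left had]; nlinarith
    · rw [min_eq_right hda]; nlinarith
  calc 2 * a * b * (r b - r a) ≤ (a + b) * (a + min a (b - a)) * (r b - r a) :=
        mul_le_mul_of_nonneg_right hweight hrab
    _ ≤ (a + b) * ((b - a) * (r (a + b) - r b) + (b - a) * (r b - r (b - a))) := by
        rw [mul_assoc]
        exact mul_le_mul_of_nonneg_left (by rw [add_mul]; linarith) (by linarith)
    _ = (a + b) * (b - a) * (r (a + b) - r (b - a)) := by ring

end ConvexOn

theorem stmt_5 :
    IsLeast {D : ℝ | ∀ r : ℝ → ℝ, Continuous r → (∀ x : ℝ, r (-x) = r x) →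
      MonotoneOn r (Set.Ioi 0) → ConvexOn ℝ (Set.Ioi 0) r →
      ∀ a b : ℝ, 0 < a → a < b →
        D * (((a + b) * r (a + b) - (b - a) * r (b - a)) / (2 * a)
            - ((a + b) * r (a + b) + (b - a) * r (b - a)) / (2 * b))
          ≥ (b * r b) / b - (a * r a) / a} 1 := by
  constructor
  · intro r _ _ hmono hconv a b ha hab
    have hb : 0 < b := ha.trans hab
    rw [div_two_mul_sub_div_two_mul_eq _ _ ha.ne' hb.ne', mul_div_cancel_left₀ _ hb.ne',
      mul_div_cancel_left₀ _ ha.ne', one_mul, ge_iff_le, le_div_iff₀ (by positivity)]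
    linarith [hconv.two_mul_mul_sub_le hmono ha hab]
  · intro D hD
    have habs := hD abs continuous_abs abs_neg
      (fun x hx y hy hxy => by rwa [abs_of_pos hx, abs_of_pos hy])
      (convexOn_norm (convex_Ioi 0))
    have hlower : ∀ a : ℝ, 0 < a → a < 1 → 1 ≤ D * (1 + a) := by
      intro a ha ha1
      have h := habs a 1 ha ha1
      rw [div_two_mul_sub_div_two_mul_eq _ _ ha.ne' one_ne_zero, abs_of_pos (by linarith),
        abs_of_pos (by linarith), abs_one, abs_of_pos ha,
        show (a + 1) * (1 - a) * (a + 1 - (1 - a)) / (2 * a * 1) = (1 - a) * (1 + a) by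
          field_simp; ring, one_mul, div_one, mul_div_cancel_left₀ _ ha.ne'] at h
      nlinarith
    refine le_of_forall_pos_le_add fun ε hε => ?_
    have hmin : 0 < min ε (1 / 2) := lt_min hε one_half_pos
    have h := hlower _ hmin (by linarith [min_le_right ε (1 / 2)])
    nlinarith [min_le_left ε (1 / 2)]
end

section
/- For p ≥ 3, the function f(y) = |1+y|^{p−1} + sgn(y−1)|y−1|^{p−1} is convex on (0, ∞), and consequently g(y) = f(y)/y is nondecreasing on (0, ∞). -/
/-!
With `q = p - 1` and the signed power `signedRpow q t = sign t * |t| ^ q`, on `[0, ∞)` we have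
`f y = signedRpow q (y + 1) + signedRpow q (y - 1)`. The signed power is `C¹` with derivative
`q * |t| ^ (q - 1)`, so `f' y = q * (|y + 1| ^ (q - 1) + |y - 1| ^ (q - 1))`: an even function of `y`
which is convex because `q - 1 ≥ 1`, hence nondecreasing on `[0, ∞)`. So `f` is convex there, and
since `f 0 = 0`, `f y / y` is the slope of the chord from the origin, nondecreasing in `y`.
-/

open Set

noncomputable def signedRpow (q t : ℝ) : ℝ := Real.sign t * |t| ^ q

lemma signedRpow_eq_mul_abs_rpow (q t : ℝ) : signedRpow q t = t * |t| ^ (q - 1) := by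
  rcases lt_trichotomy t 0 with ht | rfl | ht
  · rw [signedRpow, Real.sign_of_neg ht, abs_of_neg ht, Real.rpow_sub_one (neg_ne_zero.mpr ht.ne),
      mul_div_left_comm, div_neg, div_self ht.ne]
    ring
  · simp [signedRpow]
  · rw [signedRpow, Real.sign_of_pos ht, abs_of_pos ht, Real.rpow_sub_one ht.ne']
    field_simp

lemma continuous_signedRpow {q : ℝ} (hq : 1 ≤ q) : Continuous (signedRpow q) := by
  simp_rw [funext (signedRpow_eq_mul_abs_rpow q)]
  exact continuous_id.mul (continuous_abs.rpow_const fun _ => Or.inr (by linarith))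

lemma hasDerivAt_signedRpow {q : ℝ} (hq : 1 < q) (t : ℝ) :
    HasDerivAt (signedRpow q) (q * |t| ^ (q - 1)) t := by
  refine hasDerivAt_of_hasDerivAt_of_ne' (g := fun s => q * |s| ^ (q - 1)) (x := 0)
    (fun y hy => ?_) (continuous_signedRpow hq.le).continuousAt
    (continuous_const.mul (continuous_abs.rpow_const fun _ => Or.inr (by linarith))).continuousAt t
  rcases hy.lt_or_gt with hy | hy
  · have hneg : signedRpow q =ᶠ[nhds y] fun s => -(-s) ^ q := by
      filter_upwards [Iio_mem_nhds hy] with s hs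
      rw [signedRpow, Real.sign_of_neg hs, abs_of_neg hs, neg_one_mul]
    have := ((Real.hasDerivAt_rpow_const (p := q) (Or.inl (neg_ne_zero.mpr hy.ne))).comp y
      (hasDerivAt_neg y)).neg
    rw [abs_of_neg hy]
    convert this.congr_of_eventuallyEq hneg using 1
    ring
  · have hpos : signedRpow q =ᶠ[nhds y] fun s => s ^ q := by
      filter_upwards [Ioi_mem_nhds hy] with s hs
      rw [signedRpow, Real.sign_of_pos hs, abs_of_pos hs, one_mul]
    rw [abs_of_pos hy]
    exact (Real.hasDerivAt_rpow_const (Or.inl hy.ne')).congr_of_eventuallyEq hpos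

lemma convexOn_abs_rpow_s9 {r : ℝ} (hr : 1 ≤ r) : ConvexOn ℝ univ fun t : ℝ => |t| ^ r := by
  refine ⟨convex_univ, fun x _ y _ a b ha hb hab => ?_⟩
  calc |a • x + b • y| ^ r ≤ (a • |x| + b • |y|) ^ r := by
        gcongr
        simpa [abs_of_nonneg ha, abs_of_nonneg hb] using abs_add_le (a * x) (b * y)
    _ ≤ a • |x| ^ r + b • |y| ^ r :=
        (convexOn_rpow hr).2 (abs_nonneg x) (abs_nonneg y) ha hb hab

lemma ConvexOn.monotoneOn_Ici_of_even_s9 {f : ℝ → ℝ} (hf : ConvexOn ℝ univ f)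
    (heven : ∀ x, f (-x) = f x) : MonotoneOn f (Ici 0) := by
  intro x hx y _ hxy
  have hmem : x ∈ segment ℝ (-y) y := by
    rw [segment_eq_Icc (by linarith [mem_Ici.mp hx])]
    exact ⟨by linarith [mem_Ici.mp hx], hxy⟩
  simpa [heven] using hf.le_max_of_mem_segment (mem_univ _) (mem_univ _) hmem

lemma ConvexOn.monotoneOn_div_of_map_zero {f : ℝ → ℝ} (hf : ConvexOn ℝ (Ici 0) f) (h0 : f 0 = 0) :
    MonotoneOn (fun x => f x / x) (Ioi 0) := fun x hx y hy hxy => by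
  simpa [h0] using hf.secant_mono self_mem_Ici (Ioi_subset_Ici_self hx) (Ioi_subset_Ici_self hy)
    (ne_of_gt hx) (ne_of_gt hy) hxy

lemma convexOn_signedRpow_add_add_signedRpow_sub {q : ℝ} (hq : 2 ≤ q) (a : ℝ) :
    ConvexOn ℝ (Ici 0) fun y => signedRpow q (y + a) + signedRpow q (y - a) := by
  set F := fun y => signedRpow q (y + a) + signedRpow q (y - a)
  have hF : ∀ y, HasDerivAt F (q * (|y + a| ^ (q - 1) + |y - a| ^ (q - 1))) y := fun y => by
    rw [mul_add]
    exact ((hasDerivAt_signedRpow (by linarith) _).comp_add_const y a).add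
      ((hasDerivAt_signedRpow (by linarith) _).comp_sub_const y a)
  have hmono : MonotoneOn (fun y => |y + a| ^ (q - 1) + |y - a| ^ (q - 1)) (Ici 0) := by
    refine ConvexOn.monotoneOn_Ici_of_even_s9 ?_ fun y => ?_
    · have h := convexOn_abs_rpow_s9 (r := q - 1) (by linarith)
      exact (h.comp_affineMap (AffineMap.id ℝ ℝ + AffineMap.const ℝ ℝ a)).add
        (h.comp_affineMap (AffineMap.id ℝ ℝ - AffineMap.const ℝ ℝ a))
    · show |-y + a| ^ (q - 1) + |-y - a| ^ (q - 1) = _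
      rw [add_comm, show -y + a = -(y - a) by ring, show -y - a = -(y + a) by ring, abs_neg,
        abs_neg]
  refine MonotoneOn.convexOn_of_deriv (convex_Ici 0)
    (continuous_iff_continuousAt.mpr fun y => (hF y).continuousAt).continuousOn
    (fun y _ => (hF y).differentiableAt.differentiableWithinAt) ?_
  rw [interior_Ici]
  intro x hx y hy hxy
  rw [(hF x).deriv, (hF y).deriv]
  exact mul_le_mul_of_nonneg_left
    (hmono (Ioi_subset_Ici_self hx) (Ioi_subset_Ici_self hy) hxy) (by linarith)

theorem stmt_9 (p : ℝ) (hp : 3 ≤ p) (f : ℝ → ℝ)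
    (hf : ∀ y : ℝ, f y = |1 + y| ^ (p - 1) + Real.sign (y - 1) * |y - 1| ^ (p - 1)) :
    ConvexOn ℝ (Set.Ioi 0) f ∧ MonotoneOn (fun y => f y / y) (Set.Ioi 0) := by
  have hEq : EqOn (fun y => signedRpow (p - 1) (y + 1) + signedRpow (p - 1) (y - 1)) f (Ici 0) :=
    fun y hy => by
      show signedRpow (p - 1) (y + 1) + signedRpow (p - 1) (y - 1) = f y
      rw [hf, signedRpow, signedRpow, Real.sign_of_pos (by linarith [mem_Ici.mp hy]), one_mul,
        add_comm y 1]
  have hf0 : f 0 = 0 := by simp [hf, Real.sign_of_neg]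
  have hconv : ConvexOn ℝ (Ici 0) f :=
    (convexOn_signedRpow_add_add_signedRpow_sub (by linarith) 1).congr hEq
  exact ⟨hconv.subset Ioi_subset_Ici_self (convex_Ioi 0), hconv.monotoneOn_div_of_map_zero hf0⟩
end

section
/- Let L ≥ 1 be an integer and σ² = (L+1)(2L+1)/6. For every a ≥ 0: √(2/(πσ²)) ∫_{√a}^∞ (x² − a) e^{−x²/(2σ²)} dx ≥ (1/L) ∑_{k=⌈√a⌉}^{L} (k² − a). -/
/-!
Write `u = √a` and `c = √(2 / (π σ²))`. Since `X` and `G` have the same second moment `σ²`, both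
sides split into `σ² - a` plus a deficit: if `⌈u⌉ ≤ L`, then
`E(X² - a)₊ = σ² - a + (1/L) ∑_{1 ≤ k < u} (a - k²)` and
`E(G² - a)₊ = σ² - a + c ∫₀ᵘ (a - x²) e^{-x²/(2σ²)} dx`.
The discrete deficit is at most `(16L - 9) u³ / (24 L²)`. Integrating the alternating Taylor bound
`e^{-q} ≥ 1 - q + q²/2 - q³/6` shows that the Gaussian one is at least `(431/840) c u³` as long as
`u² ≤ 3σ²`, which holds for `u ≤ L`. What remains is an inequality between constants depending on
`L` only, which needs `π < 3.15`.
-/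

open MeasureTheory Real Set

theorem exp_neg_le_quadratic_of_nonneg {x : ℝ} (hx : 0 ≤ x) : exp (-x) ≤ 1 - x + x ^ 2 / 2 := by
  let f (t : ℝ) : ℝ := 1 - t + t ^ 2 / 2 - exp (-t)
  have hderiv (t : ℝ) : deriv f t = -1 + t + exp (-t) := by
    simp (disch := fun_prop) [f]
    ring
  have hmono : MonotoneOn f (Ici 0) := by
    refine monotoneOn_of_deriv_nonneg (convex_Ici 0) (by fun_prop) (by fun_prop) fun t _ ↦ ?_
    rw [hderiv]
    linarith [add_one_le_exp (-t)]
  have := hmono self_mem_Ici hx hx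
  simp only [f, neg_zero, exp_zero] at this
  linarith

theorem cubic_le_exp_neg_of_nonneg {x : ℝ} (hx : 0 ≤ x) :
    1 - x + x ^ 2 / 2 - x ^ 3 / 6 ≤ exp (-x) := by
  let f (t : ℝ) : ℝ := exp (-t) - (1 - t + t ^ 2 / 2 - t ^ 3 / 6)
  have hderiv (t : ℝ) : deriv f t = 1 - t + t ^ 2 / 2 - exp (-t) := by
    simp (disch := fun_prop) [f]
    ring
  have hmono : MonotoneOn f (Ici 0) := by
    refine monotoneOn_of_deriv_nonneg (convex_Ici 0) (by fun_prop) (by fun_prop) fun t ht ↦ ?_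
    rw [interior_Ici] at ht
    rw [hderiv]
    linarith [exp_neg_le_quadratic_of_nonneg (le_of_lt ht)]
  have := hmono self_mem_Ici hx hx
  simp only [f, neg_zero, exp_zero] at this
  linarith

theorem integral_Ioi_sq_mul_exp_neg_mul_sq {b : ℝ} (hb : 0 < b) :
    ∫ x in Ioi (0 : ℝ), x ^ 2 * exp (-b * x ^ 2) = √(π / b) / (4 * b) := by
  have h := integral_rpow_mul_exp_neg_mul_rpow (p := 2) (q := 2) (by norm_num) (by norm_num) hb
  have hGamma := Gamma_nat_add_one_add_half 0
  norm_num [rpow_two] at h hGamma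
  simp only [neg_mul]
  rw [h, hGamma, rpow_neg hb.le, sqrt_div' _ hb.le, show (3 / 2 : ℝ) = 1 + 1 / 2 by norm_num,
    rpow_add hb, rpow_one, ← sqrt_eq_rpow]
  field_simp
  norm_num

theorem integral_sq_sub_sq_mul_cubic (u b : ℝ) :
    ∫ x in (0)..u, (u ^ 2 - x ^ 2) * (1 - b * x ^ 2 + (b * x ^ 2) ^ 2 / 2 - (b * x ^ 2) ^ 3 / 6) =
      u ^ 3 * (2 / 3 - 2 / 15 * (b * u ^ 2) + (b * u ^ 2) ^ 2 / 35 - (b * u ^ 2) ^ 3 / 189) := by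
  let F (x : ℝ) : ℝ := u ^ 2 * x - (1 + u ^ 2 * b) * x ^ 3 / 3 + (b + u ^ 2 * b ^ 2 / 2) * x ^ 5 / 5
    - (b ^ 2 / 2 + u ^ 2 * b ^ 3 / 6) * x ^ 7 / 7 + b ^ 3 / 6 * x ^ 9 / 9
  rw [intervalIntegral.integral_deriv_eq_sub' F ?_ (by fun_prop) (by fun_prop)]
  · simp only [F]
    ring
  · funext x
    simp (disch := fun_prop) [F]
    ring

/- The cubic is decreasing (its derivative has no real root) and `431/840` is its value at `3/2`. -/
lemma cubic_ge_of_le_three_halves {t : ℝ} (ht : 0 ≤ t) (ht' : t ≤ 3 / 2) :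
    431 / 840 ≤ 2 / 3 - 2 / 15 * t + t ^ 2 / 35 - t ^ 3 / 189 := by
  nlinarith [sq_nonneg t, mul_nonneg ht (sub_nonneg.2 ht'),
    mul_nonneg (mul_nonneg ht ht) (sub_nonneg.2 ht')]

lemma neg_sq_div_eq_neg_inv_mul_sq (x v : ℝ) : -x ^ 2 / (2 * v) = -(2 * v)⁻¹ * x ^ 2 := by
  ring

theorem setIntegral_Ioi_sq_sub_sq_mul_exp_nonneg {v u : ℝ} (hu : 0 ≤ u) :
    0 ≤ ∫ x in Ioi u, (x ^ 2 - u ^ 2) * exp (-x ^ 2 / (2 * v)) := by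
  refine setIntegral_nonneg measurableSet_Ioi fun x hx ↦ mul_nonneg ?_ (exp_pos _).le
  linarith [pow_le_pow_left₀ hu (le_of_lt hx) 2]

section HalfNormal

variable {v : ℝ} (hv : 0 < v)
include hv

theorem integrable_exp_neg_sq_div : Integrable fun x : ℝ ↦ exp (-x ^ 2 / (2 * v)) := by
  simp_rw [neg_sq_div_eq_neg_inv_mul_sq]
  exact integrable_exp_neg_mul_sq (by positivity)

theorem integrable_sq_mul_exp_neg_sq_div :
    Integrable fun x : ℝ ↦ x ^ 2 * exp (-x ^ 2 / (2 * v)) := by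
  simp_rw [neg_sq_div_eq_neg_inv_mul_sq]
  simpa using integrable_rpow_mul_exp_neg_mul_sq (b := (2 * v)⁻¹) (by positivity) (s := 2)
    (by norm_num)

lemma sqrt_two_div_pi_mul_mul_sqrt : √(2 / (π * v)) * √(π / (2 * v)⁻¹) = 2 := by
  rw [← sqrt_mul (by positivity), show 2 / (π * v) * (π / (2 * v)⁻¹) = 2 ^ 2 by field_simp]
  exact sqrt_sq zero_le_two

theorem halfNormal_integral_eq_one :
    √(2 / (π * v)) * ∫ x in Ioi 0, exp (-x ^ 2 / (2 * v)) = 1 := by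
  simp_rw [neg_sq_div_eq_neg_inv_mul_sq, integral_gaussian_Ioi, mul_div_assoc',
    sqrt_two_div_pi_mul_mul_sqrt hv]
  norm_num

theorem halfNormal_integral_sq_eq :
    √(2 / (π * v)) * ∫ x in Ioi 0, x ^ 2 * exp (-x ^ 2 / (2 * v)) = v := by
  simp_rw [neg_sq_div_eq_neg_inv_mul_sq,
    integral_Ioi_sq_mul_exp_neg_mul_sq (inv_pos.2 (by positivity : 0 < 2 * v)), mul_div_assoc',
    sqrt_two_div_pi_mul_mul_sqrt hv]
  field_simp
  norm_num

theorem halfNormal_tail_eq (u a : ℝ) :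
    √(2 / (π * v)) * ∫ x in Ioi u, (x ^ 2 - a) * exp (-x ^ 2 / (2 * v)) =
      v - a + √(2 / (π * v)) * ∫ x in (0)..u, (a - x ^ 2) * exp (-x ^ 2 / (2 * v)) := by
  have hint : Integrable fun x : ℝ ↦ (x ^ 2 - a) * exp (-x ^ 2 / (2 * v)) := by
    simp_rw [sub_mul]
    exact (integrable_sq_mul_exp_neg_sq_div hv).sub ((integrable_exp_neg_sq_div hv).const_mul a)
  have hsplit := intervalIntegral.integral_interval_add_Ioi hint.integrableOn hint.integrableOn
    (a := 0) (b := u)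
  have hfull : √(2 / (π * v)) * ∫ x in Ioi 0, (x ^ 2 - a) * exp (-x ^ 2 / (2 * v)) = v - a := by
    simp_rw [sub_mul]
    rw [integral_sub (integrable_sq_mul_exp_neg_sq_div hv).integrableOn
      ((integrable_exp_neg_sq_div hv).const_mul a).integrableOn, integral_const_mul, mul_sub,
      halfNormal_integral_sq_eq hv, mul_left_comm, halfNormal_integral_eq_one hv, mul_one]
  have hneg : ∫ x in (0)..u, (a - x ^ 2) * exp (-x ^ 2 / (2 * v)) =
      -∫ x in (0)..u, (x ^ 2 - a) * exp (-x ^ 2 / (2 * v)) := by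
    rw [← intervalIntegral.integral_neg]
    congr 1 with x
    ring
  rw [hneg, ← hfull, ← hsplit]
  ring

theorem integral_sq_sub_sq_mul_exp_ge {u : ℝ} (hu : 0 ≤ u) (huv : u ^ 2 ≤ 3 * v) :
    431 / 840 * u ^ 3 ≤ ∫ x in (0)..u, (u ^ 2 - x ^ 2) * exp (-x ^ 2 / (2 * v)) := by
  set b := (2 * v)⁻¹
  have hbu : b * u ^ 2 ≤ 3 / 2 := by
    rw [inv_mul_le_iff₀ (by positivity)]
    linarith
  calc 431 / 840 * u ^ 3
      ≤ u ^ 3 * (2 / 3 - 2 / 15 * (b * u ^ 2) + (b * u ^ 2) ^ 2 / 35 - (b * u ^ 2) ^ 3 / 189) := by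
        rw [mul_comm]
        exact mul_le_mul_of_nonneg_left (cubic_ge_of_le_three_halves (by positivity) hbu)
          (by positivity)
    _ = ∫ x in (0)..u, (u ^ 2 - x ^ 2) *
          (1 - b * x ^ 2 + (b * x ^ 2) ^ 2 / 2 - (b * x ^ 2) ^ 3 / 6) :=
        (integral_sq_sub_sq_mul_cubic u b).symm
    _ ≤ ∫ x in (0)..u, (u ^ 2 - x ^ 2) * exp (-x ^ 2 / (2 * v)) := by
        refine intervalIntegral.integral_mono_on hu
          (Continuous.intervalIntegrable (by fun_prop) _ _)
          (Continuous.intervalIntegrable (by fun_prop) _ _) fun x hx ↦ ?_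
        have hxu : x ^ 2 ≤ u ^ 2 := pow_le_pow_left₀ hx.1 hx.2 2
        rw [neg_sq_div_eq_neg_inv_mul_sq, neg_mul]
        exact mul_le_mul_of_nonneg_left (cubic_le_exp_neg_of_nonneg (by positivity)) (by linarith)

end HalfNormal

lemma sum_range_sq_sub (n : ℕ) (a : ℝ) :
    ∑ k ∈ Finset.range n, ((k : ℝ) ^ 2 - a) = ((n : ℝ) - 1) * n * (2 * n - 1) / 6 - n * a := by
  induction n with
  | zero => simp
  | succ n ih =>
    rw [Finset.sum_range_succ, ih]
    push_cast
    ring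

lemma sum_Icc_sq_sub {m L : ℕ} (hm : m ≤ L + 1) (a : ℝ) :
    ∑ k ∈ Finset.Icc m L, ((k : ℝ) ^ 2 - a) =
      L * (L + 1) * (2 * L + 1) / 6 - L * a + ((m : ℝ) - 1) * (a - m * (2 * m - 1) / 6) := by
  rw [← Finset.Ico_add_one_right_eq_Icc, Finset.sum_Ico_eq_sub _ hm, sum_range_sq_sub,
    sum_range_sq_sub]
  push_cast
  ring

/- For a natural number `m ≥ 1`, `(m - 1) * (u ^ 2 - m * (2 * m - 1) / 6)` is
`∑_{1 ≤ k < m} (u² - k²)`. As a function of a real `m` it peaks near `m = u + 1/2`. -/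
lemma deficit_le_of_le_of_lt_add_one {u m : ℝ} (hu : 1 ≤ u) (hum : u ≤ m) (hmu : m < u + 1) :
    (m - 1) * (u ^ 2 - m * (2 * m - 1) / 6) ≤ 2 / 3 * u ^ 3 - 3 / 8 * u ^ 2 := by
  nlinarith [mul_nonneg (sq_nonneg (u + 1 / 2 - m)) (by linarith : 0 ≤ m + 2 * u - 1 / 2)]

lemma deficit_ceil_le {u L : ℝ} (hL : 1 ≤ L) (hu : 0 ≤ u) (huL : u ≤ L) :
    ((⌈u⌉₊ : ℝ) - 1) * (u ^ 2 - ⌈u⌉₊ * (2 * ⌈u⌉₊ - 1) / 6) ≤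
      (16 * L - 9) / (24 * L) * u ^ 3 := by
  rcases lt_or_ge u 1 with hu1 | hu1
  · have hRHS : 0 ≤ (16 * L - 9) / (24 * L) * u ^ 3 := by
      have : 0 ≤ 16 * L - 9 := by linarith
      positivity
    have : ⌈u⌉₊ ≤ 1 := Nat.ceil_le.2 (by exact_mod_cast hu1.le)
    interval_cases ⌈u⌉₊
    · norm_num
      nlinarith
    · norm_num
      exact hRHS
  · calc _ ≤ 2 / 3 * u ^ 3 - 3 / 8 * u ^ 2 :=
          deficit_le_of_le_of_lt_add_one hu1 (Nat.le_ceil u) (Nat.ceil_lt_add_one hu)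
      _ = (2 / 3 - 3 / (8 * u)) * u ^ 3 := by field_simp
      _ ≤ (2 / 3 - 3 / (8 * L)) * u ^ 3 := by gcongr
      _ = (16 * L - 9) / (24 * L) * u ^ 3 := by field_simp; ring

lemma discrete_coeff_le_gaussian_coeff {L : ℝ} (hL : 1 ≤ L) :
    (16 * L - 9) / (24 * L) ≤ 431 / 840 * L * √(2 / (π * ((L + 1) * (2 * L + 1) / 6))) := by
  have hpoly : (16 * L - 9) ^ 2 * ((L + 1) * (2 * L + 1)) ≤ 576 * L ^ 4 := by
    nlinarith [sq_nonneg (L - 3 / 2), sq_nonneg L, mul_nonneg (sq_nonneg L) (sq_nonneg (L - 3 / 2))]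
  rw [mul_comm (431 / 840 * L), ← div_le_iff₀ (by positivity)]
  apply le_sqrt_of_sq_le
  rw [le_div_iff₀ (by positivity)]
  field_simp
  nlinarith [mul_le_mul_of_nonneg_left hpoly pi_pos.le,
    mul_lt_mul_of_pos_right pi_lt_d2 (by positivity : (0 : ℝ) < L ^ 4)]

theorem stmt_11 (L : ℕ) (hL : 1 ≤ L) (a : ℝ) (ha : 0 ≤ a)
    (σ2 : ℝ) (hσ2 : σ2 = ((L : ℝ) + 1) * (2 * (L : ℝ) + 1) / 6) :
    (1 / (L : ℝ)) * ∑ k ∈ Finset.Icc ⌈Real.sqrt a⌉₊ L, ((k : ℝ) ^ 2 - a)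
      ≤ Real.sqrt (2 / (Real.pi * σ2)) *
          ∫ x in Set.Ioi (Real.sqrt a), (x ^ 2 - a) * Real.exp (-x ^ 2 / (2 * σ2)) := by
  obtain ⟨u, hu, rfl⟩ : ∃ u, 0 ≤ u ∧ a = u ^ 2 := ⟨√a, sqrt_nonneg a, (sq_sqrt ha).symm⟩
  rw [sqrt_sq hu]
  have hL' : (1 : ℝ) ≤ L := by exact_mod_cast hL
  have hv : 0 < σ2 := by rw [hσ2]; positivity
  rcases lt_or_ge (L : ℝ) u with huL | huL
  · rw [Finset.Icc_eq_empty (not_le.2 (Nat.lt_ceil.2 huL)), Finset.sum_empty, mul_zero]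
    exact mul_nonneg (sqrt_nonneg _) (setIntegral_Ioi_sq_sub_sq_mul_exp_nonneg hu)
  have hC := discrete_coeff_le_gaussian_coeff hL'
  rw [← hσ2] at hC
  have hI := integral_sq_sub_sq_mul_exp_ge hv hu (by rw [hσ2]; nlinarith)
  rw [sum_Icc_sq_sub ((Nat.ceil_le.2 huL).trans L.le_succ), halfNormal_tail_eq hv]
  set m : ℝ := (⌈u⌉₊ : ℝ)
  set c := √(2 / (π * σ2))
  set I := ∫ x in (0)..u, (u ^ 2 - x ^ 2) * exp (-x ^ 2 / (2 * σ2))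
  have hdeficit : (m - 1) * (u ^ 2 - m * (2 * m - 1) / 6) / L ≤ c * I := by
    rw [div_le_iff₀ (by positivity)]
    calc _ ≤ (16 * L - 9) / (24 * L) * u ^ 3 := deficit_ceil_le hL' hu huL
      _ ≤ 431 / 840 * L * c * u ^ 3 := by gcongr
      _ = c * (431 / 840 * u ^ 3) * L := by ring
      _ ≤ c * I * L := by gcongr
  have hmean : 1 / (L : ℝ) * (L * (L + 1) * (2 * L + 1) / 6 - L * u ^ 2 +
      (m - 1) * (u ^ 2 - m * (2 * m - 1) / 6)) =
      σ2 - u ^ 2 + (m - 1) * (u ^ 2 - m * (2 * m - 1) / 6) / L := by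
    rw [hσ2]
    field_simp
  rw [hmean]
  linarith
end

section
/- Let h(t) = √(2/π) ∫₀^{√t} (t − x²) e^{−x²/2} dx − (2/3)t for t ≥ 0. Then h'(t) = √(2/π) ∫₀^{√t} e^{−x²/2} dx − 2/3, h' is increasing, h'(49/20) > 0.2, and h(t) > 0 for all t ≥ 49/20. -/
/-!
With `G s = ∫₀^s e^{-x²/2} dx`, integration by parts gives
`∫₀^s (t - x²) e^{-x²/2} dx = (t - 1) G(s) + s e^{-s²/2}`. Along `t = s²` this has `s`-derivative
`2 s G(s)`, so `h' t = √(2/π) G(√t) - 2/3`, strictly increasing with `G`. At `t = 49/20` both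
integrals are bounded below by integrating the polynomial bound `e^{-u} ≥ 1 - u + u²/2 - u³/6`
at `u = x²/2`. Then `h' > 0.2` on `[49/20, ∞)`, so `h` increases there from `h (49/20) > 0`.
-/

open Real Set Filter Topology intervalIntegral

noncomputable def gauss (x : ℝ) : ℝ := exp (-x ^ 2 / 2)

lemma continuous_gauss : Continuous gauss := by
  unfold gauss; fun_prop

lemma gauss_pos (x : ℝ) : 0 < gauss x := exp_pos _

lemma hasDerivAt_gauss (x : ℝ) : HasDerivAt gauss (-x * gauss x) x := by
  have hexponent : HasDerivAt (fun x : ℝ => -x ^ 2 / 2) (-x) x :=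
    ((hasDerivAt_pow 2 x).neg.div_const 2).congr_deriv (by ring)
  exact hexponent.exp.congr_deriv (mul_comm _ _)

lemma hasDerivAt_integral_gauss (s : ℝ) :
    HasDerivAt (fun u => ∫ x in (0 : ℝ)..u, gauss x) (gauss s) s :=
  integral_hasDerivAt_right (continuous_gauss.intervalIntegrable 0 s)
    (continuous_gauss.stronglyMeasurableAtFilter _ _) continuous_gauss.continuousAt

lemma strictMono_integral_gauss : StrictMono fun u => ∫ x in (0 : ℝ)..u, gauss x :=
  strictMono_of_hasDerivAt_pos hasDerivAt_integral_gauss gauss_pos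

lemma integral_sub_sq_mul_gauss (t s : ℝ) :
    ∫ x in (0 : ℝ)..s, (t - x ^ 2) * gauss x
      = (t - 1) * (∫ x in (0 : ℝ)..s, gauss x) + s * gauss s := by
  have hderiv (x : ℝ) :
      HasDerivAt (fun u => (t - 1) * (∫ y in (0 : ℝ)..u, gauss y) + u * gauss u)
        ((t - x ^ 2) * gauss x) x :=
    (((hasDerivAt_integral_gauss x).const_mul (t - 1)).add
      ((hasDerivAt_id x).mul (hasDerivAt_gauss x))).congr_deriv (by simp only [id]; ring)
  rw [integral_eq_sub_of_hasDerivAt (fun x _ => hderiv x)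
    (((by fun_prop : Continuous fun x => t - x ^ 2).mul continuous_gauss).intervalIntegrable _ _)]
  simp

lemma hasDerivAt_integral_sqrt_sub_sq_mul_gauss {t : ℝ} (ht : 0 < t) :
    HasDerivAt (fun u => ∫ x in (0 : ℝ)..√u, (u - x ^ 2) * gauss x)
      (∫ x in (0 : ℝ)..√t, gauss x) t := by
  set G := fun u => ∫ x in (0 : ℝ)..u, gauss x
  have hΦ : HasDerivAt (fun s => (s ^ 2 - 1) * G s + s * gauss s) (2 * √t * G √t) √t :=
    ((((hasDerivAt_pow 2 √t).sub_const 1).mul (hasDerivAt_integral_gauss √t)).add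
      ((hasDerivAt_id √t).mul (hasDerivAt_gauss √t))).congr_deriv (by simp only [id]; ring)
  have hclosed : (fun u => ∫ x in (0 : ℝ)..√u, (u - x ^ 2) * gauss x)
      =ᶠ[𝓝 t] (fun s => (s ^ 2 - 1) * G s + s * gauss s) ∘ sqrt := by
    filter_upwards [Ioi_mem_nhds ht] with u hu
    simp only [Function.comp, integral_sub_sq_mul_gauss, sq_sqrt (le_of_lt hu), G]
  refine ((hΦ.comp t (hasDerivAt_sqrt ht.ne')).congr_of_eventuallyEq hclosed).congr_deriv ?_
  simp only [G]
  field_simp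

lemma le_of_hasDerivAt_le_of_nonneg {f g f' g' : ℝ → ℝ} (hf : ∀ x, HasDerivAt f (f' x) x)
    (hg : ∀ x, HasDerivAt g (g' x) x) (h₀ : f 0 ≤ g 0) (hderiv : ∀ x, 0 < x → f' x ≤ g' x)
    {x : ℝ} (hx : 0 ≤ x) : f x ≤ g x := by
  have hmono : MonotoneOn (g - f) (Ici 0) := by
    refine monotoneOn_of_hasDerivWithinAt_nonneg (f' := g' - f') (convex_Ici 0)
      (fun y _ => ((hg y).sub (hf y)).continuousAt.continuousWithinAt)
      (fun y _ => ((hg y).sub (hf y)).hasDerivWithinAt) fun y hy => ?_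
    rw [interior_Ici] at hy
    exact sub_nonneg.mpr (hderiv y hy)
  have := hmono self_mem_Ici hx hx
  simp only [Pi.sub_apply] at this
  linarith

lemma exp_neg_le_quadratic {u : ℝ} (hu : 0 ≤ u) : exp (-u) ≤ 1 - u + u ^ 2 / 2 :=
  le_of_hasDerivAt_le_of_nonneg (f' := fun x => -exp (-x)) (g' := fun x => -1 + x)
    (fun x => by simpa using (hasDerivAt_neg x).exp)
    (fun x => (((hasDerivAt_id x).const_sub 1).add ((hasDerivAt_pow 2 x).div_const 2)).congr_deriv
      (by simp))
    (by simp) (fun x _ => by linarith [add_one_le_exp (-x)]) hu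

lemma cubic_le_exp_neg {u : ℝ} (hu : 0 ≤ u) : 1 - u + u ^ 2 / 2 - u ^ 3 / 6 ≤ exp (-u) :=
  le_of_hasDerivAt_le_of_nonneg (f' := fun x => -1 + x - x ^ 2 / 2) (g' := fun x => -exp (-x))
    (fun x => ((((hasDerivAt_id x).const_sub 1).add ((hasDerivAt_pow 2 x).div_const 2)).sub
      ((hasDerivAt_pow 3 x).div_const 6)).congr_deriv (by simp; ring))
    (fun x => by simpa using (hasDerivAt_neg x).exp)
    (by simp) (fun x hx => by linarith [exp_neg_le_quadratic hx.le]) hu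

lemma taylor_le_gauss (x : ℝ) : 1 - x ^ 2 / 2 + x ^ 4 / 8 - x ^ 6 / 48 ≤ gauss x := by
  have := cubic_le_exp_neg (by positivity : 0 ≤ x ^ 2 / 2)
  rw [gauss, neg_div]
  linarith

lemma integral_taylor_gauss (s : ℝ) :
    ∫ x in (0 : ℝ)..s, (1 - x ^ 2 / 2 + x ^ 4 / 8 - x ^ 6 / 48)
      = s - s ^ 3 / 6 + s ^ 5 / 40 - s ^ 7 / 336 := by
  have hderiv (x : ℝ) : HasDerivAt (fun u => u - u ^ 3 / 6 + u ^ 5 / 40 - u ^ 7 / 336)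
      (1 - x ^ 2 / 2 + x ^ 4 / 8 - x ^ 6 / 48) x :=
    (((hasDerivAt_id x).sub ((hasDerivAt_pow 3 x).div_const 6)).add
      ((hasDerivAt_pow 5 x).div_const 40)).sub ((hasDerivAt_pow 7 x).div_const 336)
      |>.congr_deriv (by norm_num; ring)
  rw [integral_eq_sub_of_hasDerivAt (fun x _ => hderiv x)
    ((by fun_prop : Continuous fun x : ℝ =>
      1 - x ^ 2 / 2 + x ^ 4 / 8 - x ^ 6 / 48).intervalIntegrable _ _)]
  ring

lemma integral_sub_sq_mul_taylor_gauss (t s : ℝ) :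
    ∫ x in (0 : ℝ)..s, (t - x ^ 2) * (1 - x ^ 2 / 2 + x ^ 4 / 8 - x ^ 6 / 48)
      = t * s - (1 + t / 2) * s ^ 3 / 3 + (1 / 2 + t / 8) * s ^ 5 / 5
        - (1 / 8 + t / 48) * s ^ 7 / 7 + s ^ 9 / 432 := by
  have hderiv (x : ℝ) : HasDerivAt (fun u => t * u - (1 + t / 2) * u ^ 3 / 3
      + (1 / 2 + t / 8) * u ^ 5 / 5 - (1 / 8 + t / 48) * u ^ 7 / 7 + u ^ 9 / 432)
      ((t - x ^ 2) * (1 - x ^ 2 / 2 + x ^ 4 / 8 - x ^ 6 / 48)) x :=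
    (((((hasDerivAt_id x).const_mul t).sub
      (((hasDerivAt_pow 3 x).const_mul (1 + t / 2)).div_const 3)).add
      (((hasDerivAt_pow 5 x).const_mul (1 / 2 + t / 8)).div_const 5)).sub
      (((hasDerivAt_pow 7 x).const_mul (1 / 8 + t / 48)).div_const 7)).add
      ((hasDerivAt_pow 9 x).div_const 432) |>.congr_deriv (by norm_num; ring)
  rw [integral_eq_sub_of_hasDerivAt (fun x _ => hderiv x)
    ((by fun_prop : Continuous fun x : ℝ =>
      (t - x ^ 2) * (1 - x ^ 2 / 2 + x ^ 4 / 8 - x ^ 6 / 48)).intervalIntegrable _ _)]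
  ring

lemma taylor_le_integral_gauss {s : ℝ} (hs : 0 ≤ s) :
    s - s ^ 3 / 6 + s ^ 5 / 40 - s ^ 7 / 336 ≤ ∫ x in (0 : ℝ)..s, gauss x := by
  rw [← integral_taylor_gauss]
  exact integral_mono_on hs ((by fun_prop : Continuous fun x : ℝ =>
    1 - x ^ 2 / 2 + x ^ 4 / 8 - x ^ 6 / 48).intervalIntegrable _ _)
    (continuous_gauss.intervalIntegrable _ _) fun x _ => taylor_le_gauss x

lemma taylor_le_integral_sub_sq_mul_gauss {t : ℝ} (ht : 0 ≤ t) :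
    t * √t - (1 + t / 2) * √t ^ 3 / 3 + (1 / 2 + t / 8) * √t ^ 5 / 5
        - (1 / 8 + t / 48) * √t ^ 7 / 7 + √t ^ 9 / 432
      ≤ ∫ x in (0 : ℝ)..√t, (t - x ^ 2) * gauss x := by
  rw [← integral_sub_sq_mul_taylor_gauss]
  refine integral_mono_on (sqrt_nonneg t) ((by fun_prop : Continuous fun x : ℝ =>
      (t - x ^ 2) * (1 - x ^ 2 / 2 + x ^ 4 / 8 - x ^ 6 / 48)).intervalIntegrable _ _)
    (((by fun_prop : Continuous fun x => t - x ^ 2).mul continuous_gauss).intervalIntegrable _ _)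
    fun x hx => mul_le_mul_of_nonneg_left (taylor_le_gauss x) ?_
  have : x ^ 2 ≤ √t ^ 2 := pow_le_pow_left₀ hx.1 hx.2 2
  rw [sq_sqrt ht] at this
  linarith

lemma le_sqrt_two_div_pi_mul_sqrt : (1.2488 : ℝ) ≤ √(2 / π) * √(49 / 20) := by
  rw [← sqrt_mul (by positivity), le_sqrt (by norm_num) (by positivity),
    div_mul_eq_mul_div, le_div_iff₀ pi_pos]
  nlinarith [pi_lt_d6]

noncomputable def gaussGap (t : ℝ) : ℝ :=
  √(2 / π) * (∫ x in (0 : ℝ)..√t, (t - x ^ 2) * gauss x) - 2 / 3 * t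

noncomputable def gaussGap' (t : ℝ) : ℝ :=
  √(2 / π) * (∫ x in (0 : ℝ)..√t, gauss x) - 2 / 3

lemma hasDerivAt_gaussGap {t : ℝ} (ht : 0 < t) : HasDerivAt gaussGap (gaussGap' t) t :=
  ((hasDerivAt_integral_sqrt_sub_sq_mul_gauss ht).const_mul _).sub
    ((hasDerivAt_id t).const_mul _) |>.congr_deriv (by simp [gaussGap'])

lemma strictMonoOn_gaussGap' : StrictMonoOn gaussGap' (Ici 0) := fun a ha _ _ hab =>
  sub_lt_sub_right (mul_lt_mul_of_pos_left (strictMono_integral_gauss (sqrt_lt_sqrt ha hab))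
    (sqrt_pos.mpr (by positivity))) _

lemma two_tenths_lt_gaussGap' : (0.2 : ℝ) < gaussGap' (49 / 20) := by
  set s := √(49 / 20 : ℝ)
  have hs : s ^ 2 = 49 / 20 := sq_sqrt (by norm_num)
  have htaylor := taylor_le_integral_gauss (sqrt_nonneg (49 / 20 : ℝ))
  have hpoly : s - s ^ 3 / 6 + s ^ 5 / 40 - s ^ 7 / 336 = s * (89339 / 128000) := by
    -- the multiplier is (left side - right side) / (s ^ 2 - 49 / 20), a polynomial in `s`
    linear_combination (-s / 6 + (s ^ 3 + 49 / 20 * s) / 40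
      - (s ^ 5 + 49 / 20 * s ^ 3 + (49 / 20) ^ 2 * s) / 336) * hs
  rw [hpoly] at htaylor
  have := mul_le_mul_of_nonneg_left htaylor (sqrt_nonneg (2 / π))
  unfold gaussGap'
  nlinarith [le_sqrt_two_div_pi_mul_sqrt]

lemma gaussGap_49_div_20_pos : 0 < gaussGap (49 / 20) := by
  set s := √(49 / 20 : ℝ)
  have hs : s ^ 2 = 49 / 20 := sq_sqrt (by norm_num)
  have htaylor := taylor_le_integral_sub_sq_mul_gauss (by norm_num : (0 : ℝ) ≤ 49 / 20)
  have hpoly : 49 / 20 * s - (1 + 49 / 20 / 2) * s ^ 3 / 3 + (1 / 2 + 49 / 20 / 8) * s ^ 5 / 5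
      - (1 / 8 + 49 / 20 / 48) * s ^ 7 / 7 + s ^ 9 / 432 = s * (45425009 / 34560000) := by
    linear_combination (-(1 + 49 / 20 / 2) * s / 3
      + (1 / 2 + 49 / 20 / 8) * (s ^ 3 + 49 / 20 * s) / 5
      - (1 / 8 + 49 / 20 / 48) * (s ^ 5 + 49 / 20 * s ^ 3 + (49 / 20) ^ 2 * s) / 7
      + (s ^ 7 + 49 / 20 * s ^ 5 + (49 / 20) ^ 2 * s ^ 3 + (49 / 20) ^ 3 * s) / 432) * hs
  rw [hpoly] at htaylor
  have := mul_le_mul_of_nonneg_left htaylor (sqrt_nonneg (2 / π))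
  unfold gaussGap
  nlinarith [le_sqrt_two_div_pi_mul_sqrt]

lemma gaussGap'_pos {t : ℝ} (ht : 49 / 20 ≤ t) : 0 < gaussGap' t :=
  lt_trans (by norm_num) (two_tenths_lt_gaussGap'.trans_le
    (strictMonoOn_gaussGap'.monotoneOn (by norm_num) (show 0 ≤ t by linarith) ht))

lemma strictMonoOn_gaussGap : StrictMonoOn gaussGap (Ici (49 / 20)) := by
  have hderiv (u : ℝ) (hu : u ∈ Ici (49 / 20 : ℝ)) : HasDerivAt gaussGap (gaussGap' u) u :=
    hasDerivAt_gaussGap (by linarith [mem_Ici.mp hu])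
  exact strictMonoOn_of_hasDerivWithinAt_pos (convex_Ici _)
    (fun u hu => (hderiv u hu).continuousAt.continuousWithinAt)
    (fun u hu => (hderiv u (interior_subset hu)).hasDerivWithinAt)
    fun u hu => gaussGap'_pos (interior_subset hu)

theorem stmt_14 (h h' : ℝ → ℝ)
    (hh : ∀ t : ℝ, h t =
      Real.sqrt (2 / Real.pi) * (∫ x in (0 : ℝ)..Real.sqrt t, (t - x ^ 2) * Real.exp (-x ^ 2 / 2))
        - (2 / 3) * t)
    (hh' : ∀ t : ℝ, h' t =
      Real.sqrt (2 / Real.pi) * (∫ x in (0 : ℝ)..Real.sqrt t, Real.exp (-x ^ 2 / 2)) - 2 / 3) :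
    (∀ t ∈ Set.Ioi (0 : ℝ), HasDerivAt h (h' t) t)
    ∧ StrictMonoOn h' (Set.Ici 0)
    ∧ 0.2 < h' (49 / 20)
    ∧ ∀ t : ℝ, 49 / 20 ≤ t → 0 < h t := by
  obtain rfl : h = gaussGap := funext hh
  obtain rfl : h' = gaussGap' := funext hh'
  exact ⟨fun _ ht => hasDerivAt_gaussGap ht, strictMonoOn_gaussGap', two_tenths_lt_gaussGap',
    fun _ ht =>
      gaussGap_49_div_20_pos.trans_le (strictMonoOn_gaussGap.monotoneOn self_mem_Ici ht ht)⟩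
end
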